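/- Let L be an isotropic system and A an Eulerian vector of L. Then there exist a labeled graph G and a vector B ∈ K^V such that (G, A, B) is a graphic presentation of L. Moreover, this presentation is unique up to a nonzero constant: if (G, A, B) and (G', A, B') are both graphic presentations of L with the same Eulerian vector A, then there exists a nonzero c ∈ F_q such that G' = cG and B' = cB. -/

import Mathlib

open Matrix

section Defs

variable {F : Type} [Field F] {V : Type} [Fintype V] [DecidableEq V]

/-- The bilinear form on `K = F × F`: `⟨(x,y),(x',y')⟩ = x·y' − x'·y`. -/
def formK (a b : F × F) : F := a.1 * b.2 - b.1 * a.2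

/-- The bilinear form on `K^V`: `⟨A,A'⟩ = Σ_v ⟨A v, A' v⟩`. -/
def formKV (A B : V → F × F) : F := ∑ v, formK (A v) (B v)

/-- An isotropic system: an `n`-dimensional subspace of `K^V` on which the form vanishes. -/
def IsIsotropic (L : Submodule F (V → F × F)) : Prop :=
  Module.finrank F L = Fintype.card V ∧ ∀ A ∈ L, ∀ B ∈ L, formKV A B = 0

/-- A labeled graph on `V` over `F`: a symmetric matrix with zero diagonal. -/
def IsLGraph (G : Matrix V V F) : Prop := G.IsSymm ∧ ∀ v, G v v = 0

/-- The `2n × 2n` matrix `D(A,B)` with four diagonal blocks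
`[[diag Z, diag T],[diag X, diag Y]]` where `A = (X,Y)`, `B = (Z,T)`. -/
def Dmat (A B : V → F × F) : Matrix (V ⊕ V) (V ⊕ V) F :=
  fromBlocks (diagonal fun v => (B v).1) (diagonal fun v => (B v).2)
    (diagonal fun v => (A v).1) (diagonal fun v => (A v).2)

/-- The diagonal entries of `det D(A,B) = (diag Z)(diag Y) − (diag X)(diag T)`. -/
def detD (A B : V → F × F) (v : V) : F := (B v).1 * (A v).2 - (A v).1 * (B v).2

/-- The `v`-th row of the `n × 2n` matrix `(I | G) · D(A,B)` viewed as a vector in `K^V`. -/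
def presRow (G : Matrix V V F) (A B : V → F × F) (v : V) : V → F × F :=
  fun w => ((fromCols (1 : Matrix V V F) G * Dmat A B) v (Sum.inl w),
            (fromCols (1 : Matrix V V F) G * Dmat A B) v (Sum.inr w))

/-- `(G, A, B)` is a graphic presentation of the isotropic system `L`:
`G` is a labeled graph, `det D(A,B) = c·I` with `c ≠ 0`, and the rows of
`(I | G)·D(A,B)` form a basis of `L`. -/
def IsGraphicPresentation (L : Submodule F (V → F × F)) (G : Matrix V V F)
    (A B : V → F × F) : Prop :=
  IsLGraph G ∧ (∃ c : F, c ≠ 0 ∧ ∀ v, detD A B v = c) ∧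
  LinearIndependent F (presRow G A B) ∧
  Submodule.span F (Set.range (presRow G A B)) = L

/-- `G` is a fundamental graph of `L`. -/
def IsFundamental (L : Submodule F (V → F × F)) (G : Matrix V V F) : Prop :=
  ∃ A B, IsGraphicPresentation L G A B

/-- The local complementation operation `G *_r v`. -/
def starOp (G : Matrix V V F) (r : F) (v : V) : Matrix V V F :=
  Matrix.of fun u w => if u = v ∨ w = v ∨ u = w then G u w else G u w + r * G v u * G v w

/-- The operation `G ∘_s v`, multiplying the edges at `v` by `s`. -/
def circOp (G : Matrix V V F) (s : F) (v : V) : Matrix V V F :=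
  Matrix.of fun u w => if u = v ∨ w = v then s * G u w else G u w

/-- One local operation. -/
def LocalStep (G H : Matrix V V F) : Prop :=
  (∃ v r, H = starOp G r v) ∨ (∃ v s, s ≠ (0 : F) ∧ H = circOp G s v)

/-- Two labeled graphs are locally equivalent if one is obtained from the other by a
finite sequence of operations `*_r v` and `∘_s v`. -/
def LocallyEquivalent (G H : Matrix V V F) : Prop :=
  Relation.ReflTransGen LocalStep G H

/-- A complete vector: all coordinates nonzero. -/
def CompleteVec (A : V → F × F) : Prop := ∀ v, A v ≠ 0

/-- `E_{v,x}`: the vector equal to `x` at `v` and `0` elsewhere. -/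
def Ev (v : V) (x : F × F) : V → F × F := fun w => if w = v then x else 0

/-- `Â`: the span of the vectors `A_v = E_{v, A v}`. -/
def hatSub (A : V → F × F) : Submodule F (V → F × F) :=
  Submodule.span F (Set.range fun v => Ev v (A v))

/-- An Eulerian vector of `L`: a complete vector with `Â ∩ L = 0`. -/
def IsEulerian (L : Submodule F (V → F × F)) (A : V → F × F) : Prop :=
  CompleteVec A ∧ hatSub A ⊓ L = ⊥

/-- `ε(L)`: the number of Eulerian vectors of `L`. -/
noncomputable def eulerCount (L : Submodule F (V → F × F)) : ℕ :=
  Set.ncard {A | IsEulerian L A}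

/-- The number of pairs `(A,B)` such that `(G,A,B)` is a graphic presentation of `L`. -/
noncomputable def lamCount (L : Submodule F (V → F × F)) (G : Matrix V V F) : ℕ :=
  Set.ncard {p : (V → F × F) × (V → F × F) | IsGraphicPresentation L G p.1 p.2}

/-- The number of graphic presentations (triples `(G,A,B)`) of `L`. -/
noncomputable def presCount (L : Submodule F (V → F × F)) : ℕ :=
  Set.ncard {t : Matrix V V F × (V → F × F) × (V → F × F) |
    IsGraphicPresentation L t.1 t.2.1 t.2.2}

/-- `l(G)`: the number of labeled graphs locally equivalent to `G`. -/
noncomputable def locCount (G : Matrix V V F) : ℕ :=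
  Set.ncard {H | LocallyEquivalent G H}

/-- Connectivity of a labeled graph: the simple graph with edges `{v,w}` with
`g_{vw} ≠ 0` is connected. -/
def GraphConnected (G : Matrix V V F) : Prop :=
  (SimpleGraph.fromRel fun v w => G v w ≠ 0).Connected

end Defs

variable {F : Type} [Field F] [Fintype F] {V : Type} [Fintype V] [DecidableEq V] [Nonempty V]



section Aux
variable {F : Type} [Field F] {V : Type} [Fintype V] [DecidableEq V]

lemma formK_smul_left (s : F) (a b : F × F) : formK (s • a) b = s * formK a b := by
  simp only [formK, Prod.smul_fst, Prod.smul_snd, smul_eq_mul]; ring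

lemma formK_smul_right (s : F) (a b : F × F) : formK a (s • b) = s * formK a b := by
  simp only [formK, Prod.smul_fst, Prod.smul_snd, smul_eq_mul]; ring

lemma formK_self (a : F × F) : formK a a = 0 := sub_self _

lemma formK_sub_left (a b c : F × F) : formK (a - b) c = formK a c - formK b c := by
  simp only [formK, Prod.fst_sub, Prod.snd_sub]; ring

lemma formK_swap (a b : F × F) : formK a b = - formK b a := by
  simp only [formK]; ring

lemma mem_span_of_formK_eq_zero {a x : F × F} (ha : a ≠ 0) (h : formK a x = 0) :
    x ∈ Submodule.span F ({a} : Set (F × F)) := by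
  rw [Submodule.mem_span_singleton]
  rcases eq_or_ne a.1 0 with h1 | h1
  · have h2 : a.2 ≠ 0 := fun h2 => ha (Prod.ext h1 h2)
    have hx1 : x.1 = 0 := by
      simp only [formK, h1, zero_mul, zero_sub, neg_eq_zero, mul_eq_zero] at h
      tauto
    exact ⟨x.2 / a.2, Prod.ext (by simp [h1, hx1]) (by rw [Prod.smul_snd, smul_eq_mul]; field_simp)⟩
  · refine ⟨x.1 / a.1, Prod.ext (by rw [Prod.smul_fst, smul_eq_mul]; field_simp) ?_⟩
    simp only [Prod.smul_snd, smul_eq_mul]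
    simp only [formK] at h
    field_simp
    linear_combination -h

lemma presRow_apply (G : Matrix V V F) (A B : V → F × F) (v w : V) :
    presRow G A B v w = (if v = w then B w else 0) + G v w • A w := by
  have hmul : fromCols (1 : Matrix V V F) G * Dmat A B =
      fromCols ((1 : Matrix V V F) * diagonal (fun u => (B u).1) +
          G * diagonal (fun u => (A u).1))
        ((1 : Matrix V V F) * diagonal (fun u => (B u).2) +
          G * diagonal (fun u => (A u).2)) := by
    rw [Dmat, fromCols_mul_fromBlocks]
  unfold presRow
  rw [hmul]
  simp only [fromCols_apply_inl, fromCols_apply_inr, Matrix.add_apply, Matrix.one_mul,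
    Matrix.mul_diagonal, Matrix.diagonal_apply]
  by_cases h : v = w <;>
    simp [h, Prod.ext_iff, Prod.smul_fst, Prod.smul_snd, mul_comm]

lemma sum_smul_Ev_apply (c : V → F) (x : V → F × F) (u : V) :
    (∑ w, c w • Ev w (x w)) u = c u • x u := by
  rw [Finset.sum_apply]
  rw [Finset.sum_eq_single u]
  · simp [Ev]
  · intro w _ hw
    simp [Ev, Ne.symm hw]
  · simp

lemma hatSub_le_pi (A : V → F × F) :
    hatSub A ≤ Submodule.pi Set.univ (fun v => Submodule.span F ({A v} : Set (F × F))) := by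
  rw [hatSub, Submodule.span_le]
  rintro _ ⟨v, rfl⟩
  intro w _
  by_cases h : w = v
  · subst h
    simpa [Ev] using Submodule.mem_span_singleton_self (A w)
  · simp only [Ev, if_neg h]
    exact Submodule.zero_mem _

lemma mem_hatSub_of_forall (A : V → F × F) (X : V → F × F)
    (h : ∀ w, X w ∈ Submodule.span F ({A w} : Set (F × F))) : X ∈ hatSub A := by
  choose t ht using fun w => Submodule.mem_span_singleton.mp (h w)
  have hX : X = ∑ w, t w • Ev w (A w) := by
    funext u
    rw [sum_smul_Ev_apply, ht]
  rw [hX]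
  exact Submodule.sum_mem _ fun w _ =>
    Submodule.smul_mem _ _ (Submodule.subset_span ⟨w, rfl⟩)

lemma Ev_li (A : V → F × F) (hA : CompleteVec A) :
    LinearIndependent F (fun v => Ev v (A v)) := by
  rw [Fintype.linearIndependent_iff]
  intro c hc v
  have := congrFun hc v
  rw [sum_smul_Ev_apply] at this
  rcases smul_eq_zero.mp this with h | h
  · exact h
  · exact absurd h (hA v)

lemma finrank_hatSub (A : V → F × F) (hA : CompleteVec A) :
    Module.finrank F (hatSub A) = Fintype.card V :=
  finrank_span_eq_card (Ev_li A hA)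

lemma finrank_KV : Module.finrank F (V → F × F) = 2 * Fintype.card V := by
  rw [Module.finrank_pi_fintype]
  simp [Module.finrank_prod, mul_comm]

lemma hat_sup_eq_top (L : Submodule F (V → F × F)) (hL : IsIsotropic L)
    (A : V → F × F) (hA : IsEulerian L A) : hatSub A ⊔ L = ⊤ := by
  apply Submodule.eq_top_of_finrank_eq
  have h1 := Submodule.finrank_sup_add_finrank_inf_eq (hatSub A) L
  rw [hA.2, finrank_bot, add_zero, finrank_hatSub A hA.1, hL.1] at h1
  rw [h1, finrank_KV]
  ring

end Aux

/-- Every Eulerian vector `A` of `L` extends to a graphic presentation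
`(G, A, B)` of `L`, uniquely up to a nonzero constant. -/
theorem eulerian_graphicPresentation (hchar : ringChar F ≠ 2)
    (L : Submodule F (V → F × F)) (hL : IsIsotropic L)
    (A : V → F × F) (hA : IsEulerian L A) :
    (∃ (G : Matrix V V F) (B : V → F × F), IsGraphicPresentation L G A B) ∧
    (∀ (G G' : Matrix V V F) (B B' : V → F × F),
        IsGraphicPresentation L G A B → IsGraphicPresentation L G' A B' →
        ∃ c : F, c ≠ 0 ∧ G' = c • G ∧ B' = c • B) := by
  classical
  obtain ⟨hAc, hAL⟩ := hA
  constructor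
  · -- Existence
    -- choose b v with ⟨A v, b v⟩ = 1
    have hb : ∀ v, ∃ bv : F × F, formK (A v) bv = 1 := by
      intro v
      rcases eq_or_ne (A v).1 0 with h1 | h1
      · have h2 : (A v).2 ≠ 0 := fun h2 => hAc v (Prod.ext h1 h2)
        exact ⟨(-((A v).2)⁻¹, 0), by simp [formK, h1]; field_simp⟩
      · exact ⟨(0, ((A v).1)⁻¹), by simp [formK]; field_simp⟩
    choose b hb1 using hb
    have htop := hat_sup_eq_top L hL A ⟨hAc, hAL⟩
    -- decompose Ev v (b v) = (elt of hatSub) + C v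
    have hdec : ∀ v, ∃ C, C ∈ L ∧ Ev v (b v) - C ∈ hatSub A := by
      intro v
      have hm : Ev v (b v) ∈ hatSub A ⊔ L := htop ▸ Submodule.mem_top
      rcases Submodule.mem_sup.mp hm with ⟨h, hh, C, hC, hsum⟩
      refine ⟨C, hC, ?_⟩
      have : Ev v (b v) - C = h := by rw [← hsum]; abel
      rw [this]; exact hh
    choose C hCL hCA using hdec
    -- coordinates of the hat part
    have hpi : ∀ v w, (Ev v (b v) - C v) w ∈ Submodule.span F ({A w} : Set (F × F)) :=
      fun v w => hatSub_le_pi A (hCA v) w (Set.mem_univ w)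
    have hCoord : ∀ v w, ∃ t : F, if w = v then t = 0 else C v w = t • A w := by
      intro v w
      by_cases hw : w = v
      · exact ⟨0, by simp [hw]⟩
      · obtain ⟨t, ht⟩ := Submodule.mem_span_singleton.mp (hpi v w)
        refine ⟨-t, ?_⟩
        rw [if_neg hw]
        have hE : Ev v (b v) w = 0 := if_neg hw
        have : Ev v (b v) w - C v w = t • A w := ht.symm
        rw [hE, zero_sub] at this
        rw [neg_smul, ← this, neg_neg]
    choose g hg using hCoord
    have hgdiag : ∀ v, g v v = 0 := fun v => by simpa using hg v v
    have hgoff : ∀ v w, w ≠ v → C v w = g v w • A w := fun v w hw => by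
      simpa [if_neg hw] using hg v w
    set G : Matrix V V F := Matrix.of fun v w => g v w with hGdef
    set B : V → F × F := fun v => C v v with hBdef
    -- the rows agree with C
    have hpres : presRow G A B = C := by
      funext v w
      rw [presRow_apply]
      by_cases hw : w = v
      · subst hw
        simp [hGdef, hgdiag, hBdef]
      · rw [if_neg (fun h => hw h.symm), hgoff v w hw]
        simp [hGdef]
    -- ⟨A v, B v⟩ = 1
    have hABform : ∀ v, formK (A v) (B v) = 1 := by
      intro v
      obtain ⟨t, ht⟩ := Submodule.mem_span_singleton.mp (hpi v v)
      have hEv : Ev v (b v) v = b v := if_pos rfl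
      have hBv : B v = b v - t • A v := by
        have h' : t • A v = b v - C v v := by rw [ht, Pi.sub_apply, hEv]
        show C v v = b v - t • A v
        rw [h']; abel
      rw [hBv, formK, Prod.fst_sub, Prod.snd_sub]
      have h1 := hb1 v
      simp only [formK] at h1
      simp only [Prod.smul_fst, Prod.smul_snd, smul_eq_mul]
      ring_nf
      linear_combination h1
    have hdet : ∀ v, detD A B v = -1 := by
      intro v
      have : detD A B v = formK (B v) (A v) := rfl
      rw [this, formK_swap, hABform]
    -- linear independence
    have hli : LinearIndependent F C := by
      rw [Fintype.linearIndependent_iff]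
      intro c hc v
      have hmem : (∑ w, c w • Ev w (b w)) ∈ hatSub A := by
        have : (∑ w, c w • Ev w (b w)) =
            (∑ w, c w • (Ev w (b w) - C w)) + ∑ w, c w • C w := by
          rw [← Finset.sum_add_distrib]
          congr 1; funext w; rw [smul_sub]; abel
        rw [this, hc, add_zero]
        exact Submodule.sum_mem _ fun w _ => Submodule.smul_mem _ _ (hCA w)
      have hv : c v • b v ∈ Submodule.span F ({A v} : Set (F × F)) := by
        have := hatSub_le_pi A hmem v (Set.mem_univ v)
        rwa [sum_smul_Ev_apply] at this
      obtain ⟨t, ht⟩ := Submodule.mem_span_singleton.mp hv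
      have : formK (A v) (c v • b v) = 0 := by
        rw [← ht, formK_smul_right, formK_self, mul_zero]
      rw [formK_smul_right, hb1 v, mul_one] at this
      exact this
    -- span
    have hspan : Submodule.span F (Set.range C) = L := by
      apply Submodule.eq_of_le_of_finrank_eq
      · rw [Submodule.span_le]
        rintro _ ⟨v, rfl⟩
        exact hCL v
      · rw [finrank_span_eq_card hli, hL.1]
    refine ⟨G, B, ⟨?_, ?_⟩, ⟨-1, neg_ne_zero.mpr one_ne_zero, hdet⟩, ?_, ?_⟩
    · -- symmetry
      have hsym : ∀ v u, g u v = g v u := by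
        intro v u
        rcases eq_or_ne v u with rfl | hvu
        · rfl
        have h0 : formKV (C v) (C u) = 0 := hL.2 _ (hCL v) _ (hCL u)
        rw [formKV] at h0
        rw [← Finset.sum_subset (Finset.subset_univ ({v, u} : Finset V))] at h0
        · rw [Finset.sum_pair hvu] at h0
          have hfv : formK (C v v) (C u v) = - g u v := by
            rw [hgoff u v hvu, formK_smul_right]
            have : formK (C v v) (A v) = -1 := by
              rw [formK_swap, hABform]
            rw [this]; ring
          have hfu : formK (C v u) (C u u) = g v u := by
            rw [hgoff v u (Ne.symm hvu), formK_smul_left, hABform, mul_one]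
          rw [hfv, hfu] at h0
          linear_combination -h0
        · intro w _ hw
          simp only [Finset.mem_insert, Finset.mem_singleton, not_or] at hw
          rw [hgoff v w (Ne.symm (fun h => hw.1 h.symm)),
            hgoff u w (Ne.symm (fun h => hw.2 h.symm))]
          rw [formK_smul_left, formK_smul_right, formK_self]
          ring
      apply Matrix.ext
      intro v u
      rw [Matrix.transpose_apply]
      exact hsym v u
    · exact hgdiag
    · rw [hpres]; exact hli
    · rw [hpres]; exact hspan
  · -- Uniqueness
    rintro G G' B B' ⟨hG, ⟨c, hc, hdet⟩, hli, hspan⟩ ⟨hG', ⟨c', hc', hdet'⟩, hli', hspan'⟩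
    have hCL : ∀ v, presRow G A B v ∈ L := fun v =>
      hspan ▸ Submodule.subset_span ⟨v, rfl⟩
    have hC'L : ∀ v, presRow G' A B' v ∈ L := fun v =>
      hspan' ▸ Submodule.subset_span ⟨v, rfl⟩
    have hABf : ∀ v, formK (A v) (B v) = -c := by
      intro v
      have : detD A B v = formK (B v) (A v) := rfl
      rw [formK_swap]
      rw [← this, hdet]
    have hABf' : ∀ v, formK (A v) (B' v) = -c' := by
      intro v
      have : detD A B' v = formK (B' v) (A v) := rfl
      rw [formK_swap, ← this, hdet']
    have hkey : ∀ v, c • presRow G' A B' v - c' • presRow G A B v = 0 := by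
      intro v
      set D := c • presRow G' A B' v - c' • presRow G A B v with hD
      have hDL : D ∈ L := sub_mem (Submodule.smul_mem _ _ (hC'L v))
        (Submodule.smul_mem _ _ (hCL v))
      have hDhat : D ∈ hatSub A := by
        apply mem_hatSub_of_forall
        intro w
        rcases eq_or_ne v w with rfl | hvw
        · have hDv : D v = c • B' v - c' • B v := by
            rw [hD]
            simp only [Pi.sub_apply, Pi.smul_apply, presRow_apply, if_pos rfl, if_true,
              hG.2 v, hG'.2 v, zero_smul, add_zero]
          rw [hDv]
          apply mem_span_of_formK_eq_zero (hAc v)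
          rw [formK, Prod.fst_sub, Prod.snd_sub]
          have h1 := hABf v
          have h2 := hABf' v
          simp only [formK] at h1 h2
          simp only [Prod.smul_fst, Prod.smul_snd, smul_eq_mul]
          linear_combination c * h2 - c' * h1
        · have hDw : D w = (c * G' v w - c' * G v w) • A w := by
            rw [hD]
            simp only [Pi.sub_apply, Pi.smul_apply, presRow_apply, if_neg hvw, zero_add,
              smul_smul, sub_smul]
          rw [hDw]
          exact Submodule.smul_mem _ _ (Submodule.mem_span_singleton_self _)
      have : D ∈ hatSub A ⊓ L := Submodule.mem_inf.mpr ⟨hDhat, hDL⟩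
      rw [hAL] at this
      exact (Submodule.mem_bot F).mp this
    refine ⟨c' / c, div_ne_zero hc' hc, ?_, ?_⟩
    · apply Matrix.ext
      intro v w
      rcases eq_or_ne v w with rfl | hvw
      · rw [Matrix.smul_apply, hG.2 v, hG'.2 v, smul_zero]
      · have h0 := congrFun (hkey v) w
        simp only [Pi.sub_apply, Pi.smul_apply, presRow_apply, if_neg hvw, zero_add,
          smul_smul, Pi.zero_apply, sub_eq_zero] at h0
        rw [← sub_eq_zero, ← sub_smul] at h0
        rcases smul_eq_zero.mp h0 with h | h
        · rw [Matrix.smul_apply, smul_eq_mul]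
          rw [sub_eq_zero] at h
          field_simp
          linear_combination h
        · exact absurd h (hAc w)
    · funext v
      have h0 := congrFun (hkey v) v
      simp only [Pi.sub_apply, Pi.smul_apply, presRow_apply, if_pos rfl, if_true,
        hG.2 v, hG'.2 v, zero_smul, add_zero, Pi.zero_apply, sub_eq_zero] at h0
      rw [Pi.smul_apply]
      have : c • B' v = c • ((c' / c) • B v) := by
        rw [h0, smul_smul]
        congr 1
        field_simp
      exact smul_right_injective (F × F) hc this
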